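/- Let M be a positive integer, 1 < q ≤ M+1, and 0 < x ≤ M/(q−1). Denote by (a_i) and (b_i) the quasi-greedy and greedy expansions of x in base q, and by (α_i) the quasi-greedy expansion of 1. If (b_i) has a last nonzero element b_m (i.e., b_m ≥ 1 and b_i = 0 for all i > m), then (a_i) = b_1 ... b_{m−1} (b_m − 1) α_1 α_2 ..., i.e., a_i = b_i for i < m, a_m = b_m − 1, and a_{m+i} = α_i for all i ≥ 1. Otherwise (if (b_i) has infinitely many nonzero terms) we have (a_i) = (b_i). -/

import Mathlib

open Classical in
/-- The next quasi-greedy digit: the largest integer `m ≤ M` with `s + m / q ^ (n+1) < x`,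
where `s` is the value of the previously chosen digits. -/
noncomputable def qgDigit (M : ℕ) (q x s : ℝ) (n : ℕ) : ℕ :=
  Nat.findGreatest (fun m => s + (m : ℝ) / q ^ (n + 1) < x) M

/-- Partial sums of the quasi-greedy expansion of `x` in base `q` with digits `≤ M`. -/
noncomputable def qgSum (M : ℕ) (q x : ℝ) : ℕ → ℝ
  | 0 => 0
  | n + 1 => qgSum M q x n + (qgDigit M q x (qgSum M q x n) n : ℝ) / q ^ (n + 1)

/-- `quasiGreedy M q x n` is the `(n+1)`-st digit (so indexing starts at 0) of the
quasi-greedy expansion of `x` in base `q` with digits in `{0, ..., M}`: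
recursively, it is the largest integer `a_n ≤ M` with `a_1/q + ⋯ + a_n/q^n < x`. -/
noncomputable def quasiGreedy (M : ℕ) (q x : ℝ) (n : ℕ) : ℕ :=
  qgDigit M q x (qgSum M q x n) n

open Classical in
/-- The next greedy digit: the largest integer `m ≤ M` with `s + m / q ^ (n+1) ≤ x`,
where `s` is the value of the previously chosen digits. -/
noncomputable def gDigit (M : ℕ) (q x s : ℝ) (n : ℕ) : ℕ :=
  Nat.findGreatest (fun m => s + (m : ℝ) / q ^ (n + 1) ≤ x) M

/-- Partial sums of the greedy expansion of `x` in base `q` with digits `≤ M`. -/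
noncomputable def gSum (M : ℕ) (q x : ℝ) : ℕ → ℝ
  | 0 => 0
  | n + 1 => gSum M q x n + (gDigit M q x (gSum M q x n) n : ℝ) / q ^ (n + 1)

/-- `greedy M q x n` is the `(n+1)`-st digit (indexing from 0) of the greedy expansion
of `x` in base `q` with digits in `{0, ..., M}`: recursively, it is the largest
integer `b_n ≤ M` with `b_1/q + ⋯ + b_n/q^n ≤ x`. -/
noncomputable def greedy (M : ℕ) (q x : ℝ) (n : ℕ) : ℕ :=
  gDigit M q x (gSum M q x n) n

/-! The two algorithms pick the same digit as long as the greedy partial sum stays strictly below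
`x`. If the greedy expansion terminates at `b_m`, its partial sum reaches `x` exactly at step
`m + 1`, so the quasi-greedy algorithm must take `b_m - 1` there and is left with the remainder
`1 / q ^ (m + 1)`; rescaling by `q ^ (m + 1)`, it then runs the quasi-greedy algorithm for `1`. -/

section Digits

variable {M : ℕ} {q x s : ℝ} {n : ℕ}

lemma qgDigit_le_gDigit : qgDigit M q x s n ≤ gDigit M q x s n :=
  Nat.findGreatest_mono_left (fun _ h => h.le) M

lemma gDigit_le : gDigit M q x s n ≤ M :=
  Nat.findGreatest_le M

lemma qgDigit_eq_gDigit (h : s + (gDigit M q x s n : ℝ) / q ^ (n + 1) < x) :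
    qgDigit M q x s n = gDigit M q x s n :=
  qgDigit_le_gDigit.antisymm (Nat.le_findGreatest gDigit_le h)

lemma lt_add_of_gDigit_eq_zero (hM : 0 < M) (h : gDigit M q x s n = 0) :
    x < s + 1 / q ^ (n + 1) := by
  have := Nat.findGreatest_eq_zero_iff.1 h one_pos hM
  exact not_le.1 (by exact_mod_cast this)

lemma qgDigit_eq_pred_of_add_eq {b : ℕ} (hq : 0 < q) (hb : 1 ≤ b) (hbM : b ≤ M)
    (h : s + (b : ℝ) / q ^ (n + 1) = x) : qgDigit M q x s n = b - 1 := by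
  refine le_antisymm ?_ (Nat.le_findGreatest (by omega) ?_)
  · by_contra! hlt
    have hb_le : b ≤ qgDigit M q x s n := by omega
    have hdigit : s + (qgDigit M q x s n : ℝ) / q ^ (n + 1) < x :=
      Nat.findGreatest_of_ne_zero rfl (by omega : qgDigit M q x s n ≠ 0)
    have : (b : ℝ) / q ^ (n + 1) ≤ (qgDigit M q x s n : ℝ) / q ^ (n + 1) := by gcongr
    linarith
  · rw [Nat.cast_sub hb, Nat.cast_one, sub_div]
    have : 0 < 1 / q ^ (n + 1) := one_div_pos.2 (pow_pos hq _)
    linarith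

/-- Rescaling by `q ^ k`: a remainder `(y - t) / q ^ k` before digit `k + n` behaves like the
remainder `y - t` before digit `n`. -/
lemma qgDigit_shift (hq : 0 < q) (y t : ℝ) (k : ℕ) :
    qgDigit M q x (x - (y - t) / q ^ k) (k + n) = qgDigit M q y t n := by
  have key : ∀ a : ℕ, x - (y - t) / q ^ k + (a : ℝ) / q ^ (k + n + 1) < x ↔
      t + (a : ℝ) / q ^ (n + 1) < y := fun a => by
    rw [show x - (y - t) / q ^ k + (a : ℝ) / q ^ (k + n + 1)
        = x - (y - (t + (a : ℝ) / q ^ (n + 1))) / q ^ k by rw [add_assoc k, pow_add]; ring,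
      sub_lt_self_iff, div_pos_iff_of_pos_right (pow_pos hq k), sub_pos]
  exact le_antisymm (Nat.findGreatest_mono_left (fun a => (key a).1) M)
    (Nat.findGreatest_mono_left (fun a => (key a).2) M)

end Digits

section Sums

variable {M : ℕ} {q x : ℝ}

lemma qgSum_succ (n : ℕ) :
    qgSum M q x (n + 1) = qgSum M q x n + (quasiGreedy M q x n : ℝ) / q ^ (n + 1) := rfl

lemma gSum_succ (n : ℕ) :
    gSum M q x (n + 1) = gSum M q x n + (greedy M q x n : ℝ) / q ^ (n + 1) := rfl

lemma gSum_le (hx : 0 ≤ x) (n : ℕ) : gSum M q x n ≤ x := by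
  induction n with
  | zero => exact hx
  | succ n ih =>
    exact Nat.findGreatest_spec (P := fun m => gSum M q x n + (m : ℝ) / q ^ (n + 1) ≤ x)
      (Nat.zero_le M) (by simpa using ih)

lemma gSum_mono (hq : 0 < q) : Monotone (gSum M q x) :=
  monotone_nat_of_le_succ fun n => by
    rw [gSum_succ]
    exact le_add_of_nonneg_right (by positivity)

lemma gSum_lt_of_greedy_ne_zero (hq : 0 < q) (hx : 0 ≤ x) {n i : ℕ} (hni : n ≤ i)
    (hi : greedy M q x i ≠ 0) : gSum M q x n < x :=
  calc gSum M q x n ≤ gSum M q x i := gSum_mono hq hni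
    _ < gSum M q x (i + 1) := by
      rw [gSum_succ]
      exact lt_add_of_pos_right _ (div_pos (by exact_mod_cast Nat.pos_of_ne_zero hi)
        (pow_pos hq _))
    _ ≤ x := gSum_le hx _

lemma qgSum_eq_gSum_of_gSum_lt (hq : 0 < q) {n : ℕ} (h : gSum M q x n < x) :
    qgSum M q x n = gSum M q x n := by
  induction n with
  | zero => rfl
  | succ n ih =>
    have hs := ih ((gSum_mono hq n.le_succ).trans_lt h)
    rw [qgSum_succ, gSum_succ, quasiGreedy, greedy, hs, qgDigit_eq_gDigit h]

lemma quasiGreedy_eq_greedy_of_gSum_lt (hq : 0 < q) {n : ℕ} (h : gSum M q x (n + 1) < x) :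
    quasiGreedy M q x n = greedy M q x n := by
  rw [quasiGreedy, greedy, qgSum_eq_gSum_of_gSum_lt hq ((gSum_mono hq n.le_succ).trans_lt h)]
  exact qgDigit_eq_gDigit h

lemma gSum_add_eq_of_greedy_eq_zero {n : ℕ} (h : ∀ i, n ≤ i → greedy M q x i = 0) (i : ℕ) :
    gSum M q x (n + i) = gSum M q x n := by
  induction i with
  | zero => rfl
  | succ i ih => rw [← add_assoc, gSum_succ, ih, h _ (by omega), Nat.cast_zero, zero_div,
      add_zero]

/-- Once the greedy digits vanish, the greedy partial sum is `x`: otherwise the digit `1`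
would fit as soon as `1 / q ^ i` is smaller than the gap. -/
lemma gSum_eq_of_greedy_eq_zero (hM : 0 < M) (hq : 1 < q) (hx : 0 ≤ x) {n : ℕ}
    (h : ∀ i, n ≤ i → greedy M q x i = 0) : gSum M q x n = x := by
  refine le_antisymm (gSum_le hx n) (le_of_forall_pos_lt_add fun ε hε => ?_)
  obtain ⟨i, hi⟩ := exists_pow_lt_of_lt_one hε (inv_lt_one_of_one_lt₀ hq)
  calc x < gSum M q x (n + i) + 1 / q ^ (n + i + 1) :=
        lt_add_of_gDigit_eq_zero hM (h _ (by omega))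
    _ ≤ gSum M q x n + (q⁻¹) ^ i := by
      rw [gSum_add_eq_of_greedy_eq_zero h, one_div, ← inv_pow]
      exact add_le_add_right (pow_le_pow_of_le_one (by positivity) (inv_le_one_of_one_le₀ hq.le)
        (by omega : i ≤ n + i + 1)) _
    _ < gSum M q x n + ε := by linarith

lemma qgSum_add_of_qgSum_eq (hq : 0 < q) {k : ℕ} {y : ℝ} (h : qgSum M q x k = x - y / q ^ k)
    (i : ℕ) : qgSum M q x (k + i) = x - (y - qgSum M q y i) / q ^ k := by
  induction i with
  | zero => simpa [qgSum] using h
  | succ i ih =>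
    rw [← add_assoc, qgSum_succ, qgSum_succ, ih, quasiGreedy, ih, qgDigit_shift hq, ← quasiGreedy,
      add_assoc k, pow_add]
    field_simp
    ring

lemma quasiGreedy_add_of_qgSum_eq (hq : 0 < q) {k : ℕ} {y : ℝ}
    (h : qgSum M q x k = x - y / q ^ k) (i : ℕ) :
    quasiGreedy M q x (k + i) = quasiGreedy M q y i := by
  rw [quasiGreedy, qgSum_add_of_qgSum_eq hq h, qgDigit_shift hq, quasiGreedy]

end Sums

theorem quasiGreedy_eq_of_greedy (M : ℕ) (hM : 0 < M) (q x : ℝ) (hq1 : 1 < q)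
    (hx0 : 0 < x) :
    (∀ m : ℕ, 1 ≤ greedy M q x m → (∀ i, m < i → greedy M q x i = 0) →
      ((∀ i, i < m → quasiGreedy M q x i = greedy M q x i) ∧
        quasiGreedy M q x m = greedy M q x m - 1 ∧
        ∀ i, quasiGreedy M q x (m + 1 + i) = quasiGreedy M q 1 i)) ∧
    ({n | greedy M q x n ≠ 0}.Infinite → quasiGreedy M q x = greedy M q x) := by
  have hq : 0 < q := zero_lt_one.trans hq1
  refine ⟨fun m hbm hzero => ?_, fun hinf => funext fun n => ?_⟩
  · have hlt : gSum M q x m < x := gSum_lt_of_greedy_ne_zero hq hx0.le le_rfl (by omega)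
    have hs : qgSum M q x m = gSum M q x m := qgSum_eq_gSum_of_gSum_lt hq hlt
    have hlast : gSum M q x m + (greedy M q x m : ℝ) / q ^ (m + 1) = x :=
      gSum_eq_of_greedy_eq_zero hM hq1 hx0.le hzero
    have hdigit : quasiGreedy M q x m = greedy M q x m - 1 := by
      rw [quasiGreedy, hs]
      exact qgDigit_eq_pred_of_add_eq hq hbm gDigit_le hlast
    have hrem : qgSum M q x (m + 1) = x - 1 / q ^ (m + 1) := by
      rw [qgSum_succ, hdigit, hs, Nat.cast_sub hbm, Nat.cast_one, sub_div]
      linarith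
    exact ⟨fun i hi => quasiGreedy_eq_greedy_of_gSum_lt hq
        ((gSum_mono hq (by omega)).trans_lt hlt),
      hdigit, quasiGreedy_add_of_qgSum_eq hq hrem⟩
  · obtain ⟨i, hi, hni⟩ := hinf.exists_gt n
    exact quasiGreedy_eq_greedy_of_gSum_lt hq (gSum_lt_of_greedy_ne_zero hq hx0.le hni hi)
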